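/- arXiv:2105.11811 — 3 statements merged into one kernel-verified Lean document; each statement's English description precedes it below -/
import Mathlib

section
/- Suppose f : ℕ×ℕ → T satisfies (T1), (T2) and (T3). Let 𝒟 = ℕ ∪ {−1}, let D(w) = 𝒟 for every w ∈ ℕ, and let 𝔐₀ = ⟨ℕ,≤,D,I⟩ be the Kripke model in which, for all w ∈ ℕ and a,b ∈ 𝒟: 𝔐₀,w ⊨ a◁b iff w is even and b = a+1; 𝔐₀,w ⊨ p iff w is odd; 𝔐₀,w ⊨ M(a) iff w = 2a; and 𝔐₀,w ⊨ P_t(a) iff for some m ∈ ℕ both w = 2m and f(a,m) = t. Then 𝔐₀, 0 ⊨ A. -/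
namespace FOML

/-- First-order modal formulas over a signature assigning to each arity `n` a type
`Pred n` of `n`-ary predicate letters; individual variables are indexed by `ℕ`.
(0-ary predicate letters are proposition letters.) -/
inductive Fml (Pred : ℕ → Type) : Type
  | atom : {n : ℕ} → Pred n → (Fin n → ℕ) → Fml Pred
  | bot  : Fml Pred
  | imp  : Fml Pred → Fml Pred → Fml Pred
  | box  : Fml Pred → Fml Pred
  | all  : ℕ → Fml Pred → Fml Pred

namespace Fml

variable {Pred : ℕ → Type}

def neg (φ : Fml Pred) : Fml Pred := imp φ bot
def top : Fml Pred := neg bot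
def and (φ ψ : Fml Pred) : Fml Pred := neg (imp φ (neg ψ))
def or (φ ψ : Fml Pred) : Fml Pred := imp (neg φ) ψ
def iff (φ ψ : Fml Pred) : Fml Pred := and (imp φ ψ) (imp ψ φ)
def dia (φ : Fml Pred) : Fml Pred := neg (box (neg φ))
def ex (x : ℕ) (φ : Fml Pred) : Fml Pred := neg (all x (neg φ))

def bigAnd : List (Fml Pred) → Fml Pred
  | [] => top
  | φ :: l => and φ (bigAnd l)

def bigOr : List (Fml Pred) → Fml Pred
  | [] => bot
  | φ :: l => or φ (bigOr l)

/-- Iterated box: `□⁰φ = φ`, `□ⁿ⁺¹φ = □□ⁿφ`. -/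
def boxN : ℕ → Fml Pred → Fml Pred
  | 0, φ => φ
  | n + 1, φ => box (boxN n φ)

/-- Replace every occurrence of `□` by `□⁺`, where `□⁺ψ = ψ ∧ □ψ`
(equivalently, every `◇` by its dual `◇⁺ψ = ◇ψ ∨ ψ`). -/
def plus : Fml Pred → Fml Pred
  | atom P a => atom P a
  | bot => bot
  | imp φ ψ => imp (plus φ) (plus ψ)
  | box φ => and (plus φ) (box (plus φ))
  | all x φ => all x (plus φ)

end Fml

/-- A Kripke model with expanding domains based on the frame `⟨W, R⟩`:
a domain function `D` into nonempty subsets of the domain `Dom`, expanding along `R`,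
and an interpretation `I` of predicate letters at each world, with
`I(w,P) ⊆ D(w)ⁿ` for `n`-ary `P`. -/
structure KModel (W : Type*) (R : W → W → Prop) (Pred : ℕ → Type) where
  Dom : Type
  D : W → Set Dom
  D_ne : ∀ w, (D w).Nonempty
  D_mono : ∀ ⦃w v : W⦄, R w v → D w ⊆ D v
  I : W → (n : ℕ) → Pred n → (Fin n → Dom) → Prop
  I_dom : ∀ (w : W) (n : ℕ) (P : Pred n) (as : Fin n → Dom), I w n P as → ∀ i, as i ∈ D w

variable {W : Type*} {R : W → W → Prop} {Pred : ℕ → Type}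

/-- Truth of a formula at a world of a Kripke model under an assignment. -/
def truth (M : KModel W R Pred) : Fml Pred → W → (ℕ → M.Dom) → Prop
  | .atom (n := n) P args, w, g => M.I w n P (fun i => g (args i))
  | .bot, _, _ => False
  | .imp φ ψ, w, g => truth M φ w g → truth M ψ w g
  | .box φ, w, g => ∀ v : W, R w v → truth M φ v g
  | .all x φ, w, g => ∀ d ∈ M.D w, truth M φ w (Function.update g x d)

/-- A formula is true at a world `w` if it is true under every assignment
taking values in the domain of `w`. -/
def trueAt (M : KModel W R Pred) (w : W) (φ : Fml Pred) : Prop :=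
  ∀ g : ℕ → M.Dom, (∀ x, g x ∈ M.D w) → truth M φ w g

/-- `φ ∈ L(W,R)`: validity on the frame `⟨W,R⟩` (truth in every model with
expanding domains based on it, at every world). -/
def ValidOn (R : W → W → Prop) (φ : Fml Pred) : Prop :=
  ∀ (M : KModel W R Pred) (w : W), trueAt M w φ

/-- The model has (globally) constant domains. -/
def ConstDom (M : KModel W R Pred) : Prop := ∀ w v : W, M.D w = M.D v

/-- `φ ∈ L_c(W,R)`: truth in every model with constant domains based on `⟨W,R⟩`. -/
def ValidOnC (R : W → W → Prop) (φ : Fml Pred) : Prop :=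
  ∀ (M : KModel W R Pred), ConstDom M → ∀ w : W, trueAt M w φ

/-- A finite set `T = {t₀, …, t_s}` of tile types (represented as `Fin (s+1)`, with
`t₀ = 0`), each with four edge colours. -/
structure TileSet where
  s : ℕ
  left : Fin (s + 1) → ℕ
  right : Fin (s + 1) → ℕ
  up : Fin (s + 1) → ℕ
  down : Fin (s + 1) → ℕ

namespace TileSet

/-- (T1): colours match horizontally. -/
def T1 (ts : TileSet) (f : ℕ → ℕ → Fin (ts.s + 1)) : Prop :=
  ∀ n m : ℕ, ts.right (f n m) = ts.left (f (n + 1) m)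

/-- (T2): colours match vertically. -/
def T2 (ts : TileSet) (f : ℕ → ℕ → Fin (ts.s + 1)) : Prop :=
  ∀ n m : ℕ, ts.up (f n m) = ts.down (f n (m + 1))

/-- (T3): the tile type `t₀` occurs infinitely often in the leftmost column. -/
def T3 (ts : TileSet) (f : ℕ → ℕ → Fin (ts.s + 1)) : Prop :=
  {m : ℕ | f 0 m = 0}.Infinite

end TileSet

/-- The predicate letters used in the encoding: a binary letter `◁`; monadic letters
`M`, `P₀, …, P_{s+2}` and `P`; proposition letters `p` and `q`. -/
inductive Letter (s : ℕ) : ℕ → Type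
  | lt : Letter s 2
  | M : Letter s 1
  | P : Fin (s + 3) → Letter s 1
  | Pm : Letter s 1
  | p : Letter s 0
  | q : Letter s 0

namespace Enc

/-- Formulas in the language of the encoding. -/
abbrev F (ts : TileSet) := Fml (Letter ts.s)

/-- The list of all tile types. -/
def tiles (ts : TileSet) : List (Fin (ts.s + 1)) := List.finRange (ts.s + 1)

/-- Tile indices regarded as indices of the letters `P₀, …, P_{s+2}`. -/
def tl (ts : TileSet) (t : Fin (ts.s + 1)) : Fin (ts.s + 3) := ⟨t.1, by omega⟩

def pp (ts : TileSet) : F ts := .atom Letter.p Fin.elim0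
def qq (ts : TileSet) : F ts := .atom Letter.q Fin.elim0
def Mx (ts : TileSet) (v : ℕ) : F ts := .atom Letter.M (fun _ => v)
def Px (ts : TileSet) (j : Fin (ts.s + 3)) (v : ℕ) : F ts := .atom (Letter.P j) (fun _ => v)
def PP (ts : TileSet) (v : ℕ) : F ts := .atom Letter.Pm (fun _ => v)
def ltA (ts : TileSet) (v w : ℕ) : F ts := .atom Letter.lt ![v, w]

/-- `⟐φ = ◇(π ∧ ◇(¬π ∧ φ))`, for a "marker" formula `π` (the paper uses `π = p`,
and `π = ∀x P(x)` for the operator `⊡`). -/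
def pdia (ts : TileSet) (π φ : F ts) : F ts := .dia (.and π (.dia (.and (.neg π) φ)))

/-- Iterated `⟐`. -/
def pdiaN (ts : TileSet) (π : F ts) : ℕ → F ts → F ts
  | 0, φ => φ
  | n + 1, φ => pdia ts π (pdiaN ts π n φ)

/-- `U(x) = ⋀_{t ∈ T} ¬P_t(x)`, with the tile letters given by `Pf`. -/
def Ug (ts : TileSet) (Pf : Fin (ts.s + 1) → ℕ → F ts) (v : ℕ) : F ts :=
  .bigAnd ((tiles ts).map (fun t => .neg (Pf t v)))

/- The conjuncts of the formula `A`, parametrised by the formulas standing for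
`x ◁ y` (`rel`), `M(x)` (`Mf`), `P_t(x)` (`Pf`) and `p` (`pf`); the individual
variables `x`, `y` are `0`, `1`. -/

/-- `A₀ = ∃x □U(x)` -/
def A0g (ts : TileSet) (Pf : Fin (ts.s + 1) → ℕ → F ts) : F ts :=
  .ex 0 (.box (Ug ts Pf 0))

/-- `A₁ = ∃x(¬U(x) ∧ M(x))` -/
def A1g (ts : TileSet) (Mf : ℕ → F ts) (Pf : Fin (ts.s + 1) → ℕ → F ts) : F ts :=
  .ex 0 (.and (.neg (Ug ts Pf 0)) (Mf 0))

/-- `A₂ = ∀x∃y (x ◁ y)` -/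
def A2g (ts : TileSet) (rel : ℕ → ℕ → F ts) : F ts := .all 0 (.ex 1 (rel 0 1))

/-- `A₃ = ∀x∀y(x◁y → □(∃x M(x) → x◁y))` -/
def A3g (ts : TileSet) (rel : ℕ → ℕ → F ts) (Mf : ℕ → F ts) : F ts :=
  .all 0 (.all 1 (.imp (rel 0 1) (.box (.imp (.ex 0 (Mf 0)) (rel 0 1)))))

/-- `A₄ = ∀x∀y(x◁y → □(M(x) ↔ ¬p ∧ ⟐M(y) ∧ ¬⟐²M(y)))` -/
def A4g (ts : TileSet) (rel : ℕ → ℕ → F ts) (Mf : ℕ → F ts) (pf : F ts) : F ts :=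
  .all 0 (.all 1 (.imp (rel 0 1)
    (.box (.iff (Mf 0)
      (.and (.neg pf) (.and (pdia ts pf (Mf 1)) (.neg (pdiaN ts pf 2 (Mf 1)))))))))

/-- `A₅ = ∀x∀y □⋀_{t∈T}(M(x) ∧ P_t(y) → □(M(x) → P_t(y)))` -/
def A5g (ts : TileSet) (Mf : ℕ → F ts) (Pf : Fin (ts.s + 1) → ℕ → F ts) : F ts :=
  .all 0 (.all 1 (.box (.bigAnd ((tiles ts).map fun t =>
    .imp (.and (Mf 0) (Pf t 1)) (.box (.imp (Mf 0) (Pf t 1)))))))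

/-- `A₆ = ∀x □⋀_{t∈T}(P_t(x) → ⋀_{t'≠t} ¬P_{t'}(x))` -/
def A6g (ts : TileSet) (Pf : Fin (ts.s + 1) → ℕ → F ts) : F ts :=
  .all 0 (.box (.bigAnd ((tiles ts).map fun t =>
    .imp (Pf t 0)
      (.bigAnd (((tiles ts).filter (fun t' => decide (t' ≠ t))).map fun t' => .neg (Pf t' 0))))))

/-- `A₇ = ∀x∀y □⋀_{t∈T}(x◁y ∧ P_t(x) → ⋁_{right(t)=left(t')} P_{t'}(y))` -/
def A7g (ts : TileSet) (rel : ℕ → ℕ → F ts) (Pf : Fin (ts.s + 1) → ℕ → F ts) : F ts :=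
  .all 0 (.all 1 (.box (.bigAnd ((tiles ts).map fun t =>
    .imp (.and (rel 0 1) (Pf t 0))
      (.bigOr (((tiles ts).filter fun t' => decide (ts.right t = ts.left t')).map
        fun t' => Pf t' 1))))))

/-- `A₈ = ∀x∀y □⋀_{t∈T}(M(x) ∧ P_t(y) → □(∃y(x◁y ∧ M(y)) → ⋁_{up(t)=down(t')} P_{t'}(y)))` -/
def A8g (ts : TileSet) (rel : ℕ → ℕ → F ts) (Mf : ℕ → F ts)
    (Pf : Fin (ts.s + 1) → ℕ → F ts) : F ts :=
  .all 0 (.all 1 (.box (.bigAnd ((tiles ts).map fun t =>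
    .imp (.and (Mf 0) (Pf t 1))
      (.box (.imp (.ex 1 (.and (rel 0 1) (Mf 1)))
        (.bigOr (((tiles ts).filter fun t' => decide (ts.up t = ts.down t')).map
          fun t' => Pf t' 1))))))))

/-- `A₉ = ∀x(M(x) → □⟐P_{t₀}(x))` -/
def A9g (ts : TileSet) (Mf : ℕ → F ts) (Pf : Fin (ts.s + 1) → ℕ → F ts) (pf : F ts) : F ts :=
  .all 0 (.imp (Mf 0) (.box (pdia ts pf (Pf 0 0))))

/-- The list `[A₀, …, A₈]` (all conjuncts of `A` except `A₉`), parametrised. -/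
def AlistB (ts : TileSet) (rel : ℕ → ℕ → F ts) (Mf : ℕ → F ts)
    (Pf : Fin (ts.s + 1) → ℕ → F ts) (pf : F ts) : List (F ts) :=
  [A0g ts Pf, A1g ts Mf Pf, A2g ts rel, A3g ts rel Mf, A4g ts rel Mf pf,
   A5g ts Mf Pf, A6g ts Pf, A7g ts rel Pf, A8g ts rel Mf Pf]

/-- The tile letters `P_{t₀}, …, P_{t_s}`, i.e. `P₀, …, P_s`. -/
def PfA (ts : TileSet) : Fin (ts.s + 1) → ℕ → F ts := fun t v => Px ts (tl ts t) v

/-- The formula `A`: the conjunction of `A₀` through `A₉`. -/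
def A (ts : TileSet) : F ts :=
  .bigAnd (AlistB ts (ltA ts) (Mx ts) (PfA ts) (pp ts) ++
    [A9g ts (Mx ts) (PfA ts) (pp ts)])

/-- The formula `B`: the conjunction of `A₀` through `A₈`. -/
def B (ts : TileSet) : F ts := .bigAnd (AlistB ts (ltA ts) (Mx ts) (PfA ts) (pp ts))

/-- `A₉• = ∀x(M(x) → □(∃y M(y) → ⟐(∃y M(y) → P_{t₀}(x))))` -/
def A9bul (ts : TileSet) : F ts :=
  .all 0 (.imp (Mx ts 0) (.box (.imp (.ex 1 (Mx ts 1))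
    (pdia ts (pp ts) (.imp (.ex 1 (Mx ts 1)) (PfA ts 0 0))))))

/-- The formula `A•`: the conjunction of `A₀` through `A₈` together with `A₉•`. -/
def Abullet (ts : TileSet) : F ts :=
  .bigAnd (AlistB ts (ltA ts) (Mx ts) (PfA ts) (pp ts) ++ [A9bul ts])

/-- `⟐(P_{s+1}(x) ∧ P_{s+2}(y))`, the formula substituted for `x ◁ y` in `A′`. -/
def relA' (ts : TileSet) (v w : ℕ) : F ts :=
  pdia ts (pp ts) (.and (Px ts ⟨ts.s + 1, by omega⟩ v) (Px ts ⟨ts.s + 2, by omega⟩ w))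

/-- The formula `A′`: the result of substituting `⟐(P_{s+1}(x) ∧ P_{s+2}(y))` for
`x ◁ y` throughout `A`. -/
def A' (ts : TileSet) : F ts :=
  .bigAnd (AlistB ts (relA' ts) (Mx ts) (PfA ts) (pp ts) ++
    [A9g ts (Mx ts) (PfA ts) (pp ts)])

/-- `∀x P(x)`, the marker formula of the operator `⊡`. -/
def pfS (ts : TileSet) : F ts := .all 0 (PP ts 0)

/-- `⊡φ = ◇(∀x P(x) ∧ ◇(¬∀x P(x) ∧ φ))`. -/
def bdia (ts : TileSet) (φ : F ts) : F ts := pdia ts (pfS ts) φ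

/-- Iterated `⊡`. -/
def bdiaN (ts : TileSet) (n : ℕ) (φ : F ts) : F ts := pdiaN ts (pfS ts) n φ

/-- `q ∧ P(v)`, the replacement of `M(v)`. -/
def MS (ts : TileSet) (v : ℕ) : F ts := .and (qq ts) (PP ts v)

/-- `βₙ(x) = ∃y(⊡^{s+4}(q ∧ P(y)) ∧ ¬⊡^{s+5}(q ∧ P(y)) ∧
⊡(⊡^{n+1}(q ∧ P(y)) ∧ ¬⊡^{n+2}(q ∧ P(y)) ∧ P(x)))`, and `βₙ(y)` with `x`, `y` exchanged
(the variables `x`, `y` are `0`, `1`, so the bound variable is `1 - v`). -/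
def beta (ts : TileSet) (n : Fin (ts.s + 3)) (v : ℕ) : F ts :=
  .ex (1 - v) (.and (bdiaN ts (ts.s + 4) (MS ts (1 - v)))
    (.and (.neg (bdiaN ts (ts.s + 5) (MS ts (1 - v))))
      (bdia ts (.and (bdiaN ts ((n : ℕ) + 1) (MS ts (1 - v)))
        (.and (.neg (bdiaN ts ((n : ℕ) + 2) (MS ts (1 - v)))) (PP ts v))))))

/-- The replacement `βₜ` of the tile letters. -/
def PfS (ts : TileSet) : Fin (ts.s + 1) → ℕ → F ts := fun t v => beta ts (tl ts t) v

/-- `⊡(β_{s+1}(x) ∧ β_{s+2}(y))`, the replacement of `x ◁ y` in `A*`. -/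
def relS (ts : TileSet) (v w : ℕ) : F ts :=
  bdia ts (.and (beta ts ⟨ts.s + 1, by omega⟩ v) (beta ts ⟨ts.s + 2, by omega⟩ w))

/-- `A₄* = ∀x∀y(⊡(β_{s+1}(x) ∧ β_{s+2}(y)) →
□(q ∧ P(x) ↔ ¬∀x P(x) ∧ ⊡^{s+4}(q ∧ P(y)) ∧ ¬⊡^{s+5}(q ∧ P(y))))` -/
def A4star (ts : TileSet) : F ts :=
  .all 0 (.all 1 (.imp (relS ts 0 1)
    (.box (.iff (MS ts 0)
      (.and (.neg (pfS ts))
        (.and (bdiaN ts (ts.s + 4) (MS ts 1)) (.neg (bdiaN ts (ts.s + 5) (MS ts 1)))))))))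

/-- `A₉* = ∀x(q ∧ P(x) → □⊡β₀(x))` -/
def A9star (ts : TileSet) : F ts :=
  .all 0 (.imp (MS ts 0) (.box (bdia ts (beta ts ⟨0, by omega⟩ 0))))

/-- The list `[A₀*, …, A₈*]`. -/
def BstarList (ts : TileSet) : List (F ts) :=
  [A0g ts (PfS ts), A1g ts (MS ts) (PfS ts), A2g ts (relS ts), A3g ts (relS ts) (MS ts),
   A4star ts, A5g ts (MS ts) (PfS ts), A6g ts (PfS ts), A7g ts (relS ts) (PfS ts),
   A8g ts (relS ts) (MS ts) (PfS ts)]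

/-- The formula `A*`: the conjunction of `A₀*` through `A₉*`. -/
def Astar (ts : TileSet) : F ts := .bigAnd (BstarList ts ++ [A9star ts])

/-- The formula `B*`: the conjunction of `A₀*` through `A₈*`. -/
def Bstar (ts : TileSet) : F ts := .bigAnd (BstarList ts)

/-- The formula `A⁺`: the result of replacing every `□` in `A*` by `□⁺`. -/
def Aplus (ts : TileSet) : F ts := (Astar ts).plus

/-- The formula `B⁺`: the result of replacing every `□` in `B*` by `□⁺`. -/
def Bplus (ts : TileSet) : F ts := (Bstar ts).plus

end Enc

end FOML
namespace FOML
open Enc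

/-- The model `𝔐₀` based on `⟨ℕ,≤⟩`, with constant domain `𝒟 = ℕ ∪ {−1}`
(realised as the integers `≥ -1`), in which for `w ∈ ℕ` and `a, b ∈ 𝒟`:
`a ◁ b` iff `w` is even and `b = a + 1`; `p` holds iff `w` is odd;
`M(a)` iff `w = 2a`; `P_t(a)` iff for some `m ∈ ℕ`, `w = 2m` and `f(a,m) = t`
(all other letters are interpreted by the empty relation). -/
def M0 (ts : TileSet) (f : ℕ → ℕ → Fin (ts.s + 1)) :
    KModel ℕ (fun a b : ℕ => a ≤ b) (Letter ts.s) where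
  Dom := {a : ℤ // -1 ≤ a}
  D := fun _ => Set.univ
  D_ne := fun _ => ⟨⟨0, by norm_num⟩, trivial⟩
  D_mono := by intro w v _; exact Set.Subset.rfl
  I := fun w n L as =>
    match L, as with
    | .lt, as => Even w ∧ (as 1).1 = (as 0).1 + 1
    | .M, as => (w : ℤ) = 2 * (as 0).1
    | .P j, as => ∃ (t : Fin (ts.s + 1)) (a m : ℕ),
        Enc.tl ts t = j ∧ (as 0).1 = (a : ℤ) ∧ w = 2 * m ∧ f a m = t
    | .Pm, _ => False
    | .p, _ => Odd w
    | .q, _ => False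
  I_dom := fun _ _ _ _ _ _ => trivial


section Helpers
variable {W : Type*} {R : W → W → Prop} {Pred : ℕ → Type} {M : KModel W R Pred}

lemma truth_neg (φ : Fml Pred) (w : W) (g : ℕ → M.Dom) :
    truth M (.neg φ) w g ↔ ¬ truth M φ w g := Iff.rfl

lemma truth_and (φ ψ : Fml Pred) (w : W) (g : ℕ → M.Dom) :
    truth M (φ.and ψ) w g ↔ truth M φ w g ∧ truth M ψ w g := by
  simp only [Fml.and, Fml.neg, truth]; tauto

lemma truth_or (φ ψ : Fml Pred) (w : W) (g : ℕ → M.Dom) :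
    truth M (φ.or ψ) w g ↔ truth M φ w g ∨ truth M ψ w g := by
  simp only [Fml.or, Fml.neg, truth]; tauto

lemma truth_iff (φ ψ : Fml Pred) (w : W) (g : ℕ → M.Dom) :
    truth M (φ.iff ψ) w g ↔ (truth M φ w g ↔ truth M ψ w g) := by
  simp only [Fml.iff, truth_and, truth]; tauto

lemma truth_dia (φ : Fml Pred) (w : W) (g : ℕ → M.Dom) :
    truth M (.dia φ) w g ↔ ∃ v, R w v ∧ truth M φ v g := by
  simp only [Fml.dia, Fml.neg, truth]
  constructor
  · intro h; by_contra hc; push_neg at hc; exact h fun v hv ht => hc v hv ht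
  · rintro ⟨v, hv, ht⟩ h; exact h v hv ht

lemma truth_ex (x : ℕ) (φ : Fml Pred) (w : W) (g : ℕ → M.Dom) :
    truth M (.ex x φ) w g ↔ ∃ d ∈ M.D w, truth M φ w (Function.update g x d) := by
  simp only [Fml.ex, Fml.neg, truth]
  constructor
  · intro h; by_contra hc; push_neg at hc; exact h fun d hd ht => hc d hd ht
  · rintro ⟨d, hd, ht⟩ h; exact h d hd ht

lemma truth_bigAnd (l : List (Fml Pred)) (w : W) (g : ℕ → M.Dom) :
    truth M (.bigAnd l) w g ↔ ∀ φ ∈ l, truth M φ w g := by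
  induction l with
  | nil => simp [Fml.bigAnd, Fml.top, Fml.neg, truth]
  | cons φ l ih => simp [Fml.bigAnd, truth_and, ih]

lemma truth_bigOr (l : List (Fml Pred)) (w : W) (g : ℕ → M.Dom) :
    truth M (.bigOr l) w g ↔ ∃ φ ∈ l, truth M φ w g := by
  induction l with
  | nil => simp [Fml.bigOr, truth]
  | cons φ l ih => simp [Fml.bigOr, truth_or, ih]

end Helpers

section M0Lemmas
variable {ts : TileSet} {f : ℕ → ℕ → Fin (ts.s + 1)}

lemma truth_pp (w : ℕ) (g : ℕ → (M0 ts f).Dom) :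
    truth (M0 ts f) (pp ts) w g ↔ Odd w := Iff.rfl

lemma truth_Mx (v : ℕ) (w : ℕ) (g : ℕ → (M0 ts f).Dom) :
    truth (M0 ts f) (Mx ts v) w g ↔ (w : ℤ) = 2 * (g v).1 := Iff.rfl

lemma truth_ltA (v v' : ℕ) (w : ℕ) (g : ℕ → (M0 ts f).Dom) :
    truth (M0 ts f) (ltA ts v v') w g ↔ Even w ∧ (g v').1 = (g v).1 + 1 := Iff.rfl

lemma tl_inj {t t' : Fin (ts.s + 1)} (h : tl ts t = tl ts t') : t = t' := by
  simpa [tl, Fin.ext_iff] using h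

lemma truth_Pt (t : Fin (ts.s + 1)) (v : ℕ) (w : ℕ) (g : ℕ → (M0 ts f).Dom) :
    truth (M0 ts f) (PfA ts t v) w g ↔
      ∃ a m : ℕ, (g v).1 = (a : ℤ) ∧ w = 2 * m ∧ f a m = t := by
  show (∃ (t₁ : Fin (ts.s + 1)) (a m : ℕ),
      tl ts t₁ = tl ts t ∧ (g v).1 = (a : ℤ) ∧ w = 2 * m ∧ f a m = t₁) ↔ _
  constructor
  · rintro ⟨t₁, a, m, h₁, h₂⟩; obtain rfl := tl_inj h₁; exact ⟨a, m, h₂⟩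
  · rintro ⟨a, m, h⟩; exact ⟨t, a, m, rfl, h⟩

lemma truth_pdia (φ : F ts) (w : ℕ) (g : ℕ → (M0 ts f).Dom) :
    truth (M0 ts f) (pdia ts (pp ts) φ) w g ↔
      ∃ u, w < u ∧ Even u ∧ truth (M0 ts f) φ u g := by
  simp only [pdia, truth_dia, truth_and, truth_neg, truth_pp, Nat.odd_iff, Nat.even_iff]
  constructor
  · rintro ⟨v, hwv, hv, u, hvu, hu, ht⟩
    exact ⟨u, by omega, by omega, ht⟩
  · rintro ⟨u, hwu, hu, ht⟩
    by_cases hw : w % 2 = 1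
    · exact ⟨w, le_rfl, hw, u, by omega, by omega, ht⟩
    · exact ⟨w + 1, by omega, by omega, u, by omega, by omega, ht⟩

end M0Lemmas

section Conjuncts
variable {ts : TileSet} {f : ℕ → ℕ → Fin (ts.s + 1)}

lemma conjA0 (g : ℕ → (M0 ts f).Dom) : truth (M0 ts f) (A0g ts (PfA ts)) 0 g := by
  rw [A0g, truth_ex]
  refine ⟨⟨-1, le_refl _⟩, trivial, fun v hv => ?_⟩
  rw [Ug, truth_bigAnd]
  intro φ hφ
  simp only [List.mem_map] at hφ
  obtain ⟨t, -, rfl⟩ := hφ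
  rw [truth_neg, truth_Pt]
  rintro ⟨a, m, ha, -⟩
  change (-1 : ℤ) = (a : ℤ) at ha
  omega

lemma conjA1 (g : ℕ → (M0 ts f).Dom) :
    truth (M0 ts f) (A1g ts (Mx ts) (PfA ts)) 0 g := by
  rw [A1g, truth_ex]
  refine ⟨⟨0, by norm_num⟩, trivial, ?_⟩
  rw [truth_and, truth_neg, truth_Mx]
  constructor
  · rw [Ug, truth_bigAnd]
    intro h
    have := h (.neg (PfA ts (f 0 0) 0)) (List.mem_map.2 ⟨f 0 0, List.mem_finRange _, rfl⟩)
    rw [truth_neg, truth_Pt] at this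
    exact this ⟨0, 0, by rfl, by norm_num, rfl⟩
  · show ((0 : ℕ) : ℤ) = 2 * (0 : ℤ); norm_num

lemma conjA2 (g : ℕ → (M0 ts f).Dom) : truth (M0 ts f) (A2g ts (ltA ts)) 0 g := by
  rw [A2g]
  intro d _
  rw [truth_ex]
  refine ⟨⟨d.1 + 1, by have := d.2; omega⟩, trivial, ?_⟩
  rw [truth_ltA]
  refine ⟨Even.zero, ?_⟩
  rfl

lemma conjA3 (g : ℕ → (M0 ts f).Dom) :
    truth (M0 ts f) (A3g ts (ltA ts) (Mx ts)) 0 g := by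
  rw [A3g]
  intro d _ e _ h0 v hv hex
  rw [truth_ltA] at h0 ⊢
  rw [truth_ex] at hex
  obtain ⟨z, -, hz⟩ := hex
  rw [truth_Mx] at hz
  refine ⟨?_, h0.2⟩
  rw [Nat.even_iff]; omega

lemma conjA4 (g : ℕ → (M0 ts f).Dom) :
    truth (M0 ts f) (A4g ts (ltA ts) (Mx ts) (pp ts)) 0 g := by
  rw [A4g]
  intro d _ e _ h0 v hv
  rw [truth_ltA] at h0
  obtain ⟨-, hde⟩ := h0
  simp [Function.update_self, Function.update_of_ne] at hde
  have h2' : pdiaN ts (pp ts) 2 (Mx ts 1) =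
      pdia ts (pp ts) (pdia ts (pp ts) (Mx ts 1)) := by simp [pdiaN]
  rw [truth_iff, truth_Mx, truth_and, truth_neg, truth_pp, truth_and, truth_pdia,
    truth_neg, h2', truth_pdia]
  simp only [truth_pdia, truth_Mx, Nat.odd_iff, Nat.even_iff]
  simp only [Function.update_self, Function.update_of_ne (by norm_num : (0:ℕ) ≠ 1)]
  have hd := d.2
  constructor
  · intro hv2
    refine ⟨by omega, ⟨v + 2, by omega, by omega, by omega⟩, ?_⟩
    rintro ⟨u, hu, hue, u', hu', hu'e, h⟩
    omega
  · rintro ⟨hvo, ⟨u, huv, hue, hu⟩, hn⟩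
    by_contra hne
    refine hn ⟨v + 2, by omega, by omega, u, by omega, hue, hu⟩

lemma conjA5 (g : ℕ → (M0 ts f).Dom) :
    truth (M0 ts f) (A5g ts (Mx ts) (PfA ts)) 0 g := by
  rw [A5g]
  intro d _ e _ v hv
  rw [truth_bigAnd]
  intro φ hφ
  simp only [List.mem_map] at hφ
  obtain ⟨t, -, rfl⟩ := hφ
  intro h u hu hM
  rw [truth_and, truth_Mx, truth_Pt] at h
  rw [truth_Mx] at hM
  rw [truth_Pt]
  obtain ⟨hv2, a, m, ha, hm, hf⟩ := h
  have : u = v := by omega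
  subst this
  exact ⟨a, m, ha, hm, hf⟩

lemma conjA6 (g : ℕ → (M0 ts f).Dom) :
    truth (M0 ts f) (A6g ts (PfA ts)) 0 g := by
  rw [A6g]
  intro d _ v hv
  rw [truth_bigAnd]
  intro φ hφ
  simp only [List.mem_map] at hφ
  obtain ⟨t, -, rfl⟩ := hφ
  intro h
  rw [truth_Pt] at h
  obtain ⟨a, m, ha, hm, hf⟩ := h
  rw [truth_bigAnd]
  intro ψ hψ
  simp only [List.mem_map, List.mem_filter] at hψ
  obtain ⟨t', ⟨-, ht'⟩, rfl⟩ := hψ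
  rw [truth_neg, truth_Pt]
  rintro ⟨a', m', ha', hm', hf'⟩
  have haa : a = a' := by omega
  have hmm : m = m' := by omega
  subst haa hmm
  simp only [decide_eq_true_eq] at ht'
  exact ht' (hf'.symm.trans hf)

lemma conjA7 (h1 : ts.T1 f) (g : ℕ → (M0 ts f).Dom) :
    truth (M0 ts f) (A7g ts (ltA ts) (PfA ts)) 0 g := by
  rw [A7g]
  intro d _ e _ v hv
  rw [truth_bigAnd]
  intro φ hφ
  simp only [List.mem_map] at hφ
  obtain ⟨t, -, rfl⟩ := hφ
  intro h
  rw [truth_and, truth_ltA, truth_Pt] at h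
  obtain ⟨⟨hev, hde⟩, a, m, ha, hm, hf⟩ := h
  rw [truth_bigOr]
  refine ⟨PfA ts (f (a + 1) m) 1, List.mem_map.2 ⟨f (a + 1) m,
    List.mem_filter.2 ⟨List.mem_finRange _, decide_eq_true ?_⟩, rfl⟩, ?_⟩
  · rw [← hf]; exact h1 a m
  · rw [truth_Pt]
    exact ⟨a + 1, m, by push_cast; omega, hm, rfl⟩

lemma conjA8 (h2 : ts.T2 f) (g : ℕ → (M0 ts f).Dom) :
    truth (M0 ts f) (A8g ts (ltA ts) (Mx ts) (PfA ts)) 0 g := by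
  rw [A8g]
  intro d _ e _ v hv
  rw [truth_bigAnd]
  intro φ hφ
  simp only [List.mem_map] at hφ
  obtain ⟨t, -, rfl⟩ := hφ
  intro h u hu hex
  rw [truth_and, truth_Mx, truth_Pt] at h
  obtain ⟨hM, a, m, ha, hm, hf⟩ := h
  rw [truth_ex] at hex
  obtain ⟨z, -, hz⟩ := hex
  rw [truth_and, truth_ltA, truth_Mx] at hz
  obtain ⟨⟨-, hz1⟩, hz2⟩ := hz
  simp [Function.update_self, Function.update_of_ne] at hz1 hz2 hM
  rw [truth_bigOr]
  refine ⟨PfA ts (f a (m + 1)) 1, List.mem_map.2 ⟨f a (m + 1),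
    List.mem_filter.2 ⟨List.mem_finRange _, decide_eq_true ?_⟩, rfl⟩, ?_⟩
  · rw [← hf]; exact h2 a m
  · rw [truth_Pt]
    exact ⟨a, m + 1, ha, by omega, rfl⟩

lemma conjA9 (h3 : ts.T3 f) (g : ℕ → (M0 ts f).Dom) :
    truth (M0 ts f) (A9g ts (Mx ts) (PfA ts) (pp ts)) 0 g := by
  rw [A9g]
  intro d _ hM v hv
  rw [truth_Mx] at hM
  rw [truth_pdia]
  obtain ⟨m, hmS, hmv⟩ := h3.exists_gt v
  refine ⟨2 * m, by omega, ⟨m, by omega⟩, ?_⟩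
  rw [truth_Pt]
  have hd := d.2
  refine ⟨0, m, ?_, rfl, hmS⟩
  simp only [Function.update_self] at hM ⊢
  omega

end Conjuncts

/-- if `f` satisfies (T1), (T2) and (T3), then `𝔐₀, 0 ⊨ A`. -/
theorem statement1 (ts : TileSet) (f : ℕ → ℕ → Fin (ts.s + 1))
    (h1 : ts.T1 f) (h2 : ts.T2 f) (h3 : ts.T3 f) :
    trueAt (M0 ts f) 0 (A ts) := by
  intro g hg
  rw [A, AlistB, truth_bigAnd]
  intro φ hφ
  simp only [List.cons_append, List.nil_append, List.mem_cons, List.not_mem_nil, or_false] at hφ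
  rcases hφ with rfl | rfl | rfl | rfl | rfl | rfl | rfl | rfl | rfl | rfl
  · exact conjA0 g
  · exact conjA1 g
  · exact conjA2 g
  · exact conjA3 g
  · exact conjA4 g
  · exact conjA5 g
  · exact conjA6 g
  · exact conjA7 h1 g
  · exact conjA8 h2 g
  · exact conjA9 h3 g

end FOML
end

section
/- For every n ∈ ℕ: the formula □ⁿ ref is valid on the frame 𝔊ₙ, but □ⁿ ref fails at world 0 in some model based on 𝔊ₙ₊₁; moreover, if k > m then L(𝔊ₖ) ⊆ L(𝔊ₘ) (since 𝔊ₘ is isomorphic to a generated subframe of 𝔊ₖ). Consequently L(𝔊ₖ) ≠ L(𝔊ₘ) whenever k ≠ m. -/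
namespace FOML

/-- A signature with just two proposition letters `p` and `q`. -/
inductive PL : ℕ → Type
  | p : PL 0
  | q : PL 0

namespace PL

def pf : Fml PL := .atom PL.p Fin.elim0
def qf : Fml PL := .atom PL.q Fin.elim0

/-- `ref = □p → p` -/
def refF : Fml PL := .imp (.box pf) pf

/-- `Z = □(□p → p) → (◇□p → □p)` -/
def ZF : Fml PL := .imp (.box (.imp (.box pf) pf)) (.imp (.dia (.box pf)) (.box pf))

/-- `⊠φ = (q ∧ □(¬q → φ)) ∨ (¬q ∧ □(q → φ))` -/
def XBox (φ : Fml PL) : Fml PL :=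
  .or (.and qf (.box (.imp (.neg qf) φ))) (.and (.neg qf) (.box (.imp qf φ)))

/-- Iterated `⊠`. -/
def XBoxN : ℕ → Fml PL → Fml PL
  | 0, φ => φ
  | n + 1, φ => XBox (XBoxN n φ)

end PL

/-- The frame `𝔊ₙ`: the irreflexive chain `0, …, n-1` followed by the infinite
reflexive chain `n, n+1, …`. -/
def G (n : ℕ) : ℕ → ℕ → Prop := fun i j => i < j ∨ (i = j ∧ n ≤ i)

/-- The frame `ℌₙ`: the reflexive chain `0, …, n-1` followed by the infinite
irreflexive chain `n, n+1, …`. -/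
def H (n : ℕ) : ℕ → ℕ → Prop := fun i j => i < j ∨ (i = j ∧ i < n)

end FOML
namespace FOML
open PL

/-- Part 1: `□ⁿ ref` is true at any world `w` with `N ≤ w + n` in any model on `𝔊_N`. -/
lemma truth_boxN_refF {N : ℕ} (M : KModel ℕ (G N) PL) :
    ∀ (n w : ℕ) (g : ℕ → M.Dom), N ≤ w + n → truth M (Fml.boxN n refF) w g := by
  intro n
  induction n with
  | zero =>
    intro w g hw hbox
    exact hbox w (Or.inr ⟨rfl, by omega⟩)
  | succ n ih =>
    intro w g hw v hv
    rcases hv with h | h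
    · exact ih v g (by omega)
    · exact ih v g (by omega)

/-- Part 2: the countermodel on `𝔊ₙ₊₁`: `p` holds exactly at worlds `> n`. -/
def cM (n : ℕ) : KModel ℕ (G (n + 1)) PL where
  Dom := Unit
  D := fun _ => Set.univ
  D_ne := fun _ => ⟨(), trivial⟩
  D_mono := fun _ _ _ _ h => h
  I := fun w _ P _ => match P with | PL.p => n < w | PL.q => False
  I_dom := fun _ _ _ _ _ _ => trivial

lemma cM_fails (n : ℕ) :
    ∀ (k : ℕ), k ≤ n → ∀ g : ℕ → (cM n).Dom,
      ¬ truth (cM n) (Fml.boxN k refF) (n - k) g := by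
  intro k
  induction k with
  | zero =>
    intro _ g h
    have hbox : ∀ v : ℕ, G (n + 1) (n - 0) v → truth (cM n) pf v g := by
      intro v hv
      rcases hv with h' | h'
      · show n < v; omega
      · omega
    have hp : truth (cM n) pf n g := h hbox
    have : n < n := hp
    omega
  | succ k ih =>
    intro hk g h
    have h2 : G (n + 1) (n - (k + 1)) (n - k) := Or.inl (by omega)
    exact ih (by omega) g (h (n - k) h2)

/-- Part 3: the shifted model: world `w` of `𝔊ₖ` behaves like world `w - (k - m)` of `𝔊ₘ`. -/
def shiftM (k m : ℕ) (M : KModel ℕ (G m) PL) : KModel ℕ (G k) PL where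
  Dom := M.Dom
  D := fun w => M.D (w - (k - m))
  D_ne := fun _ => M.D_ne _
  D_mono := by
    intro w v hwv
    have hle : w ≤ v := by rcases hwv with h | h <;> omega
    rcases Nat.lt_or_ge (w - (k - m)) (v - (k - m)) with h | h
    · exact M.D_mono (Or.inl h)
    · have h2 : w - (k - m) = v - (k - m) := by omega
      show M.D (w - (k - m)) ⊆ M.D (v - (k - m))
      rw [h2]
  I := fun w n P as => M.I (w - (k - m)) n P as
  I_dom := fun w n P as h => M.I_dom _ n P as h

lemma shift_truth (k m : ℕ) (hkm : m ≤ k) (M : KModel ℕ (G m) PL) :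
    ∀ (φ : Fml PL) (w : ℕ) (g : ℕ → M.Dom),
      truth (shiftM k m M) φ (w + (k - m)) g ↔ truth M φ w g := by
  intro φ
  induction φ with
  | atom P a =>
    intro w g
    show M.I (w + (k - m) - (k - m)) _ P _ ↔ M.I w _ P _
    rw [Nat.add_sub_cancel]
  | bot => intro w g; exact Iff.rfl
  | imp φ ψ ihφ ihψ =>
    intro w g
    exact imp_congr (ihφ w g) (ihψ w g)
  | box φ ih =>
    intro w g
    constructor
    · intro h u hu
      refine (ih u g).mp (h (u + (k - m)) ?_)
      rcases hu with h' | h'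
      · exact Or.inl (by omega)
      · exact Or.inr ⟨by omega, by omega⟩
    · intro h v hv
      have hle : w + (k - m) ≤ v := by rcases hv with h' | h' <;> omega
      obtain ⟨u, rfl⟩ : ∃ u, v = u + (k - m) := ⟨v - (k - m), by omega⟩
      refine (ih u g).mpr (h u ?_)
      rcases hv with h' | h'
      · exact Or.inl (by omega)
      · exact Or.inr ⟨by omega, by omega⟩
  | all x φ ih =>
    intro w g
    have hD : (shiftM k m M).D (w + (k - m)) = M.D w := by
      show M.D (w + (k - m) - (k - m)) = M.D w
      rw [Nat.add_sub_cancel]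
    constructor
    · intro h d hd
      exact (ih w _).mp (h d (by rw [hD]; exact hd))
    · intro h d hd
      exact (ih w _).mpr (h d (by rw [hD] at hd; exact hd))

lemma valid_mono {k m : ℕ} (hkm : m < k) (φ : Fml PL)
    (h : ValidOn (G k) φ) : ValidOn (G m) φ := by
  intro M w g hg
  have hg' : ∀ x, g x ∈ (shiftM k m M).D (w + (k - m)) := by
    intro x
    show g x ∈ M.D (w + (k - m) - (k - m))
    rw [Nat.add_sub_cancel]
    exact hg x
  exact (shift_truth k m hkm.le M φ w g).mp (h (shiftM k m M) (w + (k - m)) g hg')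

lemma valid_ne {k m : ℕ} (hkm : m < k) :
    {φ : Fml PL | ValidOn (G k) φ} ≠ {φ : Fml PL | ValidOn (G m) φ} := by
  intro heq
  have hmem : Fml.boxN m refF ∈ {φ : Fml PL | ValidOn (G m) φ} := by
    intro M w g _
    exact truth_boxN_refF M m w g (by omega)
  rw [← heq] at hmem
  have hvk : ValidOn (G k) (Fml.boxN m refF) := hmem
  have hvm1 : ValidOn (G (m + 1)) (Fml.boxN m refF) := by
    rcases Nat.lt_or_ge (m + 1) k with h | h
    · exact valid_mono h _ hvk
    · have : k = m + 1 := by omega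
      rw [← this]; exact hvk
  have := hvm1 (cM m) 0 (fun _ => ()) (fun _ => trivial)
  have hfail := cM_fails m m le_rfl (fun _ => ())
  rw [Nat.sub_self] at hfail
  exact hfail this

/-- `□ⁿ ref` is valid on `𝔊ₙ` but fails at world `0` in some model based
on `𝔊ₙ₊₁`; if `k > m` then `L(𝔊ₖ) ⊆ L(𝔊ₘ)`; consequently `L(𝔊ₖ) ≠ L(𝔊ₘ)` for `k ≠ m`. -/
theorem statement7 :
    (∀ n : ℕ, ValidOn (G n) (Fml.boxN n refF)) ∧
    (∀ n : ℕ, ∃ M : KModel ℕ (G (n + 1)) PL, ¬ trueAt M 0 (Fml.boxN n refF)) ∧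
    (∀ k m : ℕ, k > m → ∀ φ : Fml PL, ValidOn (G k) φ → ValidOn (G m) φ) ∧
    (∀ k m : ℕ, k ≠ m →
      {φ : Fml PL | ValidOn (G k) φ} ≠ {φ : Fml PL | ValidOn (G m) φ}) := by
  refine ⟨?_, ?_, ?_, ?_⟩
  · intro n M w g _
    exact truth_boxN_refF M n w g (by omega)
  · intro n
    refine ⟨cM n, fun h => ?_⟩
    have hfail := cM_fails n n le_rfl (fun _ => ())
    rw [Nat.sub_self] at hfail
    exact hfail (h (fun _ => ()) (fun _ => trivial))
  · intro k m hkm φ h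
    exact valid_mono hkm φ h
  · intro k m hne
    rcases Nat.lt_or_ge k m with h | h
    · exact (valid_ne h).symm
    · exact valid_ne (by omega)

end FOML
end

section
/- For all k, m ∈ ℕ: □^{k+m} ref ∈ L(𝔊ₖ) ∖ L(ℌₘ) and ⊠^{k+m} Z ∈ L(ℌₘ) ∖ L(𝔊ₖ). Hence, for all k, m ∈ ℕ, the logics L(𝔊ₖ) and L(ℌₘ) are incomparable: neither is included in the other. -/
namespace FOML
open PL

/-- A trivial one-element constant-domain model over any frame, with `p` true at the
worlds in `Sp` and `q` true at the worlds in `Sq`. -/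
def cModel {W : Type*} (R : W → W → Prop) (Sp Sq : W → Prop) : KModel W R PL where
  Dom := Unit
  D := fun _ => Set.univ
  D_ne := fun _ => ⟨(), trivial⟩
  D_mono := fun _ _ _ => le_refl _
  I := fun w _ P _ => match P with | PL.p => Sp w | PL.q => Sq w
  I_dom := fun _ _ _ _ _ _ => trivial

/-- `□ⁿ ref` is valid on `𝔊ₖ` whenever `k ≤ n`. -/
lemma Gk_valid (k n : ℕ) (hn : k ≤ n) : ValidOn (G k) (Fml.boxN n refF) := by
  intro M w g _
  suffices h : ∀ (d w : ℕ), k ≤ w + d → truth M (Fml.boxN d refF) w g from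
    h n w (le_trans hn (Nat.le_add_left n w))
  intro d
  induction d with
  | zero =>
    intro w hw
    simp only [Fml.boxN, refF, pf, truth]
    intro hp
    exact hp w (Or.inr ⟨rfl, by omega⟩)
  | succ d ih =>
    intro w hw
    simp only [Fml.boxN, truth]
    intro v hv
    rcases hv with h1 | h2
    · exact ih v (by omega)
    · exact ih v (by omega)

/-- The countermodel on `ℌₘ` refuting `□ⁿ ref`. -/
def HmM (n m : ℕ) : KModel ℕ (H m) PL := cModel (H m) (fun w => n < w) (fun _ => False)

/-- `□^{k+m} ref` is not valid on `ℌₘ`. -/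
lemma Hm_not_valid (k m : ℕ) : ¬ ValidOn (H m) (Fml.boxN (k + m) refF) := by
  intro hval
  set n := k + m with hn
  have h := hval (HmM n m) 0 (fun _ => ()) (fun _ => trivial)
  have key : ∀ (d w : ℕ), truth (HmM n m) (Fml.boxN d refF) w (fun _ => ()) →
      truth (HmM n m) refF (w + d) (fun _ => ()) := by
    intro d
    induction d with
    | zero => intro w h; simpa [Fml.boxN] using h
    | succ d ih =>
      intro w h
      simp only [Fml.boxN, truth] at h
      have h2 := ih (w + 1) (h (w + 1) (Or.inl (Nat.lt_succ_self w)))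
      have hadd : w + 1 + d = w + (d + 1) := by omega
      rwa [hadd] at h2
  have hrn := key n 0 h
  simp only [refF, pf, truth, HmM, cModel] at hrn
  have : n < 0 + n := by
    apply hrn
    intro v hv
    rcases hv with h1 | h2
    · omega
    · omega
  omega

/-- `Z` is true at every world `w ≥ m` of any model based on `ℌₘ`. -/
lemma Z_at (m : ℕ) (M : KModel ℕ (H m) PL) (w : ℕ) (hw : m ≤ w) (g : ℕ → M.Dom) :
    truth M ZF w g := by
  simp only [ZF, pf, Fml.dia, Fml.neg, truth]
  intro hbox hdia
  -- extract the witness of the diamond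
  have hex : ∃ u, H m w u ∧ ∀ j, H m u j →
      M.I j 0 PL.p fun i => g (Fin.elim0 i) := by
    by_contra hne
    exact hdia fun v hv h2 => hne ⟨v, hv, h2⟩
  obtain ⟨u, hu, hu2⟩ := hex
  have huw : w < u := by rcases hu with h | h <;> omega
  have key : ∀ (d v : ℕ), w < v → u ≤ v + d →
      M.I v 0 PL.p fun i => g (Fin.elim0 i) := by
    intro d
    induction d with
    | zero =>
      intro v hv hle
      have hle' : u ≤ v := by omega
      rcases Nat.eq_or_lt_of_le hle' with he | hlt
      · exact he ▸ hbox u hu hu2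
      · exact hu2 v (Or.inl hlt)
    | succ d ih =>
      intro v hv hle
      rcases le_or_gt u (v + d) with hle2 | hgt
      · exact ih v hv hle2
      · apply hbox v (Or.inl hv)
        intro j hj
        rcases hj with h | h
        · exact ih j (by omega) (by omega)
        · omega
  intro v hv
  have hwv : w < v := by rcases hv with h | h <;> omega
  exact key u v hwv (by omega)

/-- `⊠ⁿ Z` is true at `w` in any model based on `ℌₘ` whenever `m ≤ w + n`. -/
lemma XB_true (m : ℕ) (M : KModel ℕ (H m) PL) (g : ℕ → M.Dom) :
    ∀ n w, m ≤ w + n → truth M (XBoxN n ZF) w g := by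
  intro n
  induction n with
  | zero => intro w hw; exact Z_at m M w (by omega) g
  | succ n ih =>
    intro w hw
    simp only [XBoxN, XBox, Fml.or, Fml.and, Fml.neg, qf, truth]
    intro hnA
    by_cases hq : M.I w 0 PL.q fun i => g (Fin.elim0 i)
    · exfalso
      apply hnA
      intro h2
      apply h2 hq
      intro v hv hnq
      have hwv : w < v := by
        rcases hv with h | h
        · exact h
        · exact absurd (h.1 ▸ hq) hnq
      exact ih v (by omega)
    · intro h2
      apply h2 hq
      intro v hv hqv
      have hwv : w < v := by
        rcases hv with h | h
        · exact h
        · exact absurd (h.1 ▸ hqv) hq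
      exact ih v (by omega)

/-- `⊠^{k+m} Z` is valid on `ℌₘ`. -/
lemma Hm_valid (k m : ℕ) : ValidOn (H m) (XBoxN (k + m) ZF) := by
  intro M w g _
  exact XB_true m M g (k + m) w (by omega)

/-- The countermodel on `𝔊ₖ` refuting `⊠ⁿ Z`. -/
def GkM (n k : ℕ) : KModel ℕ (G k) PL := cModel (G k) (fun w => n < w) (fun w => w % 2 = 0)

/-- `⊠^{k+m} Z` is not valid on `𝔊ₖ`. -/
lemma Gk_not_valid (k m : ℕ) : ¬ ValidOn (G k) (XBoxN (k + m) ZF) := by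
  intro hval
  set n := k + m with hn
  have hZ : ¬ truth (GkM n k) ZF n (fun _ => ()) := by
    intro h
    simp only [ZF, pf, Fml.dia, Fml.neg, truth, GkM, cModel] at h
    have hbox : ∀ v, G k n v → ((∀ j, G k v j → n < j) → n < v) := by
      intro v hv hbp
      rcases hv with h1 | h2
      · exact h1
      · exact hbp v (Or.inr ⟨rfl, by omega⟩)
    have hdia : (∀ v, G k n v → (∀ j, G k v j → n < j) → False) → False := by
      intro hcon
      apply hcon (n + 1) (Or.inl (Nat.lt_succ_self n))
      intro j hj
      rcases hj with h1 | h2 <;> omega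
    have := h hbox hdia n (Or.inr ⟨rfl, by omega⟩)
    omega
  have key : ∀ (d w : ℕ), w + d = n → ¬ truth (GkM n k) (XBoxN d ZF) w (fun _ => ()) := by
    intro d
    induction d with
    | zero => intro w hw; rw [show w = n by omega]; exact hZ
    | succ d ih =>
      intro w hw h
      simp only [XBoxN, XBox, Fml.or, Fml.and, Fml.neg, qf, truth, GkM, cModel] at h
      by_cases hq : w % 2 = 0
      · have hnB : ¬ ((((w % 2 = 0) → False) →
            (∀ v, G k w v → (v % 2 = 0) →
              truth (GkM n k) (XBoxN d ZF) v (fun _ => ())) → False) → False) := by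
          intro hB
          exact hB fun h1 _ => h1 hq
        have hA := Classical.byContradiction (fun hA => hnB (h hA))
        apply hA
        intro _ hC
        exact ih (w + 1) (by omega)
          (hC (w + 1) (Or.inl (Nat.lt_succ_self w)) (by omega))
      · have hnA : ¬ ((((w % 2 = 0) →
            (∀ v, G k w v → ((v % 2 = 0) → False) →
              truth (GkM n k) (XBoxN d ZF) v (fun _ => ())) → False) → False)) := by
          intro hA
          exact hA fun h1 _ => hq h1
        have hB := h hnA
        apply hB
        intro _ hD
        exact ih (w + 1) (by omega)
          (hD (w + 1) (Or.inl (Nat.lt_succ_self w)) (by omega))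
  exact key n 0 (by omega) (hval (GkM n k) 0 (fun _ => ()) (fun _ => trivial))

/-- for all `k, m ∈ ℕ`, `□^{k+m} ref ∈ L(𝔊ₖ) ∖ L(ℌₘ)` and
`⊠^{k+m} Z ∈ L(ℌₘ) ∖ L(𝔊ₖ)`; hence `L(𝔊ₖ)` and `L(ℌₘ)` are incomparable. -/
theorem statement9 :
    ∀ k m : ℕ,
      (ValidOn (G k) (Fml.boxN (k + m) refF) ∧ ¬ ValidOn (H m) (Fml.boxN (k + m) refF)) ∧
      (ValidOn (H m) (XBoxN (k + m) ZF) ∧ ¬ ValidOn (G k) (XBoxN (k + m) ZF)) ∧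
      ¬ ({φ : Fml PL | ValidOn (G k) φ} ⊆ {φ : Fml PL | ValidOn (H m) φ}) ∧
      ¬ ({φ : Fml PL | ValidOn (H m) φ} ⊆ {φ : Fml PL | ValidOn (G k) φ}) := by
  intro k m
  refine ⟨⟨Gk_valid k (k + m) (by omega), Hm_not_valid k m⟩,
    ⟨Hm_valid k m, Gk_not_valid k m⟩, ?_, ?_⟩
  · intro hs
    exact Hm_not_valid k m (hs (Gk_valid k (k + m) (by omega)))
  · intro hs
    exact Gk_not_valid k m (hs (Hm_valid k m))

end FOML
end
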